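/- arXiv:2305.19802 — 2 statements merged into one kernel-verified Lean document; each statement's English description precedes it below -/
import Mathlib

section
/- Let G be the octahedron graph (complete tripartite graph K_{2,2,2}): the simple graph on vertex set {1, 2, 3, 4, 5, 6} in which two distinct vertices are adjacent unless they form one of the pairs {1,2}, {3,5}, {4,6}. Then G admits exactly two minimum edge clique covers, namely C₁ = {{1,3,4}, {1,5,6}, {2,3,6}, {2,4,5}} and C₂ = {{1,3,6}, {1,4,5}, {2,3,4}, {2,5,6}}: every edge clique cover of G of cardinality 4 equals C₁ or C₂, and no edge clique cover has cardinality less than 4. In particular, G does not admit a unique minimum edge clique cover. -/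
/-!
The octahedron has 12 edges and is `K₄`-free, so each clique covers at most 3 edges and an edge
clique cover needs at least 4 cliques. A cover by exactly 4 cliques attains this bound only if
every member is a triangle. A triangle picks one vertex from each of the three antipodal pairs,
so there are 8 of them, and among the 4-sets of triangles only the two parity classes `C₁`, `C₂`
cover every edge (checked by enumeration).
-/

def IsEdgeCliqueCover {V : Type*} (U : SimpleGraph V) (C : Finset (Finset V)) : Prop :=
  (∀ c ∈ C, U.IsClique (c : Set V)) ∧ ∀ ⦃i j : V⦄, U.Adj i j → ∃ c ∈ C, i ∈ c ∧ j ∈ c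

open Finset

theorem Nat.choose_two_lt_choose_two {m n : ℕ} (hmn : m < n) (hn : 2 ≤ n) :
    m.choose 2 < n.choose 2 := by
  obtain ⟨n, rfl⟩ : ∃ n', n = n' + 1 := ⟨n - 1, by omega⟩
  have hsucc : (n + 1).choose 2 = n + n.choose 2 := by
    rw [Nat.choose_succ_succ', Nat.choose_one_right]
  have := Nat.choose_le_choose 2 (Nat.le_of_lt_succ hmn)
  omega

namespace SimpleGraph

variable {V : Type*} {U : SimpleGraph V} {k : ℕ}

theorem IsClique.card_le_of_cliqueFree {c : Finset V} (hU : U.CliqueFree (k + 1))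
    (hc : U.IsClique (c : Set V)) : #c ≤ k := by
  by_contra! h
  obtain ⟨t, hts, ht⟩ := exists_subset_card_eq (show k + 1 ≤ #c from h)
  exact hU t ⟨hc.subset (coe_subset.2 hts), ht⟩

end SimpleGraph

namespace IsEdgeCliqueCover

variable {V : Type*} {U : SimpleGraph V} {D : Finset (Finset V)} {k : ℕ}

theorem card_edgeFinset_le_sum [DecidableEq V] [Fintype U.edgeSet] (h : IsEdgeCliqueCover U D) :
    #U.edgeFinset ≤ ∑ c ∈ D, (#c).choose 2 := by
  have hsub : U.edgeFinset ⊆ D.biUnion fun c => c.offDiag.image Sym2.mk.uncurry := by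
    intro e he
    induction e using Sym2.ind with
    | _ i j =>
      rw [SimpleGraph.mem_edgeFinset, SimpleGraph.mem_edgeSet] at he
      obtain ⟨c, hc, hi, hj⟩ := h.2 he
      exact mem_biUnion.2 ⟨c, hc, mem_image.2 ⟨(i, j), mem_offDiag.2 ⟨hi, hj, he.ne⟩, rfl⟩⟩
  calc #U.edgeFinset ≤ #(D.biUnion fun c => c.offDiag.image Sym2.mk.uncurry) := card_le_card hsub
    _ ≤ ∑ c ∈ D, #(c.offDiag.image Sym2.mk.uncurry) := card_biUnion_le
    _ = ∑ c ∈ D, (#c).choose 2 := sum_congr rfl fun c _ => Sym2.card_image_offDiag c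

theorem card_edgeFinset_le_mul [DecidableEq V] [Fintype U.edgeSet] (h : IsEdgeCliqueCover U D)
    (hU : U.CliqueFree (k + 1)) : #U.edgeFinset ≤ #D * k.choose 2 :=
  h.card_edgeFinset_le_sum.trans <| sum_le_card_nsmul _ _ _ fun c hc =>
    Nat.choose_le_choose 2 ((h.1 c hc).card_le_of_cliqueFree hU)

theorem isNClique_of_card_edgeFinset_eq [DecidableEq V] [Fintype U.edgeSet]
    (h : IsEdgeCliqueCover U D) (hU : U.CliqueFree (k + 1)) (hk : 2 ≤ k)
    (heq : #U.edgeFinset = #D * k.choose 2) : ∀ c ∈ D, U.IsNClique k c := by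
  have hle : ∀ c ∈ D, #c ≤ k := fun c hc => (h.1 c hc).card_le_of_cliqueFree hU
  have hsum : ∑ c ∈ D, (#c).choose 2 = ∑ _c ∈ D, k.choose 2 := by
    refine le_antisymm (sum_le_sum fun c hc => Nat.choose_le_choose 2 (hle c hc)) ?_
    rw [sum_const, smul_eq_mul, ← heq]
    exact h.card_edgeFinset_le_sum
  intro c hc
  have hchoose := (sum_eq_sum_iff_of_le fun c hc => Nat.choose_le_choose 2 (hle c hc)).1 hsum c hc
  refine ⟨h.1 c hc, (hle c hc).eq_of_not_lt fun hlt => ?_⟩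
  exact (Nat.choose_two_lt_choose_two hlt hk).ne hchoose

end IsEdgeCliqueCover

/-- Vertices `0, …, 5` stand for the paper's `1, …, 6`. -/
def octahedron : SimpleGraph (Fin 6) where
  Adj i j := i ≠ j ∧ ({i, j} : Finset (Fin 6)) ∉
    ({{0, 1}, {2, 4}, {3, 5}} : Finset (Finset (Fin 6)))
  symm := ⟨fun i j h => ⟨h.1.symm, by rw [pair_comm j i]; exact h.2⟩⟩
  loopless := ⟨fun _ h => h.1 rfl⟩

instance : DecidableRel octahedron.Adj := fun _ _ => inferInstanceAs (Decidable (_ ∧ _))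

def octahedronTriangle : Fin 8 → Finset (Fin 6) :=
  ![{0, 2, 3}, {0, 2, 5}, {0, 3, 4}, {0, 4, 5}, {1, 2, 3}, {1, 2, 5}, {1, 3, 4}, {1, 4, 5}]

theorem octahedronTriangle_injective : Function.Injective octahedronTriangle := by decide

theorem card_edgeFinset_octahedron : #octahedron.edgeFinset = 12 := by decide

theorem octahedron_cliqueFree_four : octahedron.CliqueFree 4 := by
  rw [← SimpleGraph.cliqueFinset_eq_empty_iff]
  decide

theorem octahedron_cliqueFinset_three :
    octahedron.cliqueFinset 3 = univ.image octahedronTriangle := by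
  decide

set_option maxRecDepth 40000 in
theorem octahedronTriangle_image_of_covers (S : Finset (Fin 8)) (hS : #S = 4)
    (hcov : ∀ ⦃i j⦄, octahedron.Adj i j → ∃ k ∈ S, i ∈ octahedronTriangle k ∧
      j ∈ octahedronTriangle k) :
    S.image octahedronTriangle = {{0, 2, 3}, {0, 4, 5}, {1, 2, 5}, {1, 3, 4}} ∨
      S.image octahedronTriangle = {{0, 2, 5}, {0, 3, 4}, {1, 2, 3}, {1, 4, 5}} := by
  revert S
  decide

theorem IsEdgeCliqueCover.octahedron_eq_of_card_eq_four {D : Finset (Finset (Fin 6))}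
    (hD : IsEdgeCliqueCover octahedron D) (h4 : #D = 4) :
    D = {{0, 2, 3}, {0, 4, 5}, {1, 2, 5}, {1, 3, 4}} ∨
      D = {{0, 2, 5}, {0, 3, 4}, {1, 2, 3}, {1, 4, 5}} := by
  have htriangles : D ⊆ univ.image octahedronTriangle := fun c hc => by
    rw [← octahedron_cliqueFinset_three, SimpleGraph.mem_cliqueFinset_iff]
    refine hD.isNClique_of_card_edgeFinset_eq octahedron_cliqueFree_four (by norm_num) ?_ c hc
    rw [card_edgeFinset_octahedron, h4]
    rfl
  obtain ⟨S, -, rfl⟩ := subset_image_iff.1 htriangles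
  refine octahedronTriangle_image_of_covers S ?_ fun i j hij => ?_
  · rwa [card_image_of_injective S octahedronTriangle_injective] at h4
  · obtain ⟨c, hc, hi, hj⟩ := hD.2 hij
    obtain ⟨k, hk, rfl⟩ := mem_image.1 hc
    exact ⟨k, hk, hi, hj⟩

/-- The octahedron graph `K_{2,2,2}` (vertices `0,…,5` standing for `1,…,6`, adjacent unless
they form one of the pairs `{0,1}`, `{2,4}`, `{3,5}`) admits exactly two minimum edge clique
covers `C₁ ≠ C₂`: no edge clique cover has fewer than `4` cliques and every edge clique cover
of cardinality `4` equals `C₁` or `C₂`. In particular the minimum edge clique cover is not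
unique. -/
theorem octahedron_exactly_two_minimum_eccs
    (G : SimpleGraph (Fin 6))
    (hG : ∀ i j : Fin 6, G.Adj i j ↔ i ≠ j ∧
      ({i, j} : Finset (Fin 6)) ∉
        ({{0, 1}, {2, 4}, {3, 5}} : Finset (Finset (Fin 6))))
    (C₁ C₂ : Finset (Finset (Fin 6)))
    (hC₁ : C₁ = {{0, 2, 3}, {0, 4, 5}, {1, 2, 5}, {1, 3, 4}})
    (hC₂ : C₂ = {{0, 2, 5}, {0, 3, 4}, {1, 2, 3}, {1, 4, 5}}) :
    IsEdgeCliqueCover G C₁ ∧ IsEdgeCliqueCover G C₂ ∧ C₁ ≠ C₂ ∧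
      (∀ D : Finset (Finset (Fin 6)), IsEdgeCliqueCover G D → 4 ≤ D.card) ∧
      (∀ D : Finset (Finset (Fin 6)), IsEdgeCliqueCover G D → D.card = 4 →
        D = C₁ ∨ D = C₂) := by
  obtain rfl : G = octahedron := by
    ext i j
    exact hG i j
  subst hC₁ hC₂
  refine ⟨⟨by decide, by decide⟩, ⟨by decide, by decide⟩, by decide, fun D hD => ?_,
    fun D hD => hD.octahedron_eq_of_card_eq_four⟩
  have hbound := hD.card_edgeFinset_le_mul octahedron_cliqueFree_four
  rw [card_edgeFinset_octahedron] at hbound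
  change 12 ≤ #D * 3 at hbound
  omega
end

section
/- Let U be a finite simple graph and let C be a minimum edge clique cover of U such that every member c of C contains a pure vertex, i.e., a vertex belonging to c and to no other member of C. Then C is the unique minimum edge clique cover of U: every edge clique cover of U of cardinality |C| equals C. -/
section

variable {V : Type*} {U : SimpleGraph V} {C D : Finset (Finset V)} {c d : Finset V} {v : V}

def IsPureVertex (C : Finset (Finset V)) (c : Finset V) (v : V) : Prop :=
  v ∈ c ∧ ∀ c' ∈ C, v ∈ c' → c' = c

namespace IsEdgeCliqueCover

theorem subset_of_isPureVertex (hC : IsEdgeCliqueCover U C) (hv : IsPureVertex C c v)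
    (hd : U.IsClique (d : Set V)) (hvd : v ∈ d) : d ⊆ c := by
  intro x hx
  obtain rfl | hxv := eq_or_ne x v
  · exact hv.1
  obtain ⟨c', hc', hvc', hxc'⟩ := hC.2 (hd hvd hx hxv.symm)
  exact hv.2 c' hc' hvc' ▸ hxc'

theorem eq_of_isPureVertex (hC : IsEdgeCliqueCover U C) (hD : IsEdgeCliqueCover U D)
    (hc : c ∈ C) (hd : d ∈ D) (hvc : IsPureVertex C c v) (hvd : IsPureVertex D d v) : c = d :=
  (hD.subset_of_isPureVertex hvd (hC.1 c hc) hvc.1).antisymm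
    (hC.subset_of_isPureVertex hvc (hD.1 d hd) hvd.1)

theorem erase [DecidableEq V] (hC : IsEdgeCliqueCover U C) (hc : (c : Set V).Subsingleton) :
    IsEdgeCliqueCover U (C.erase c) := by
  refine ⟨fun c' hc' => hC.1 c' (Finset.mem_of_mem_erase hc'), fun i j hij => ?_⟩
  obtain ⟨c', hc', hi, hj⟩ := hC.2 hij
  refine ⟨c', Finset.mem_erase.2 ⟨?_, hc'⟩, hi, hj⟩
  rintro rfl
  exact hij.ne (hc hi hj)

theorem nontrivial_of_minimal (hC : IsEdgeCliqueCover U C)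
    (hmin : ∀ D, IsEdgeCliqueCover U D → C.card ≤ D.card) (hc : c ∈ C) :
    (c : Set V).Nontrivial := by
  classical
  by_contra hnt
  have := hmin _ (hC.erase (Set.not_nontrivial_iff.1 hnt))
  exact (Finset.card_erase_lt_of_mem hc).not_ge this

theorem exists_mem_of_nontrivial (hD : IsEdgeCliqueCover U D) (hc : U.IsClique (c : Set V))
    (hnt : (c : Set V).Nontrivial) (hv : v ∈ c) : ∃ d ∈ D, v ∈ d := by
  obtain ⟨w, hw, hwv⟩ := hnt.exists_ne v
  obtain ⟨d, hd, hvd, -⟩ := hD.2 (hc hv hw hwv.symm)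
  exact ⟨d, hd, hvd⟩

theorem isPureVertex_of_card_le (hC : IsEdgeCliqueCover U C) (hD : IsEdgeCliqueCover U D)
    (hcard : D.card ≤ C.card) (hpure : ∀ c ∈ C, ∃ v, IsPureVertex C c v ∧ ∃ d ∈ D, v ∈ d)
    (hc : c ∈ C) (hv : IsPureVertex C c v) (hd : d ∈ D) (hvd : v ∈ d) :
    IsPureVertex D d v := by
  choose p hp f hfD hpf using hpure
  have hinj : ∀ c₁ c₂ (h₁ : c₁ ∈ C) (h₂ : c₂ ∈ C), f c₁ h₁ = f c₂ h₂ → c₁ = c₂ := by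
    intro c₁ c₂ h₁ h₂ hf
    have hsub := hC.subset_of_isPureVertex (hp c₂ h₂) (hD.1 _ (hfD c₂ h₂)) (hpf c₂ h₂)
    exact ((hp c₁ h₁).2 c₂ h₂ (hsub (hf ▸ hpf c₁ h₁))).symm
  have hsurj := Finset.surj_on_of_inj_on_of_card_le f hfD hinj hcard
  have hunique : ∀ d' ∈ D, v ∈ d' → d' = f c hc := by
    intro d' hd' hvd'
    obtain ⟨c', hc', rfl⟩ := hsurj d' hd'
    have hsub := hC.subset_of_isPureVertex hv (hD.1 _ hd') hvd'
    obtain rfl := (hp c' hc').2 c hc (hsub (hpf c' hc'))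
    rfl
  exact ⟨hvd, fun d' hd' hvd' => (hunique d' hd' hvd').trans (hunique d hd hvd).symm⟩

end IsEdgeCliqueCover

end

theorem pure_child_implies_unique_minimum_ecc_general
    {V : Type*} (U : SimpleGraph V)
    (C : Finset (Finset V))
    (hC : IsEdgeCliqueCover U C)
    (hCmin : ∀ D : Finset (Finset V), IsEdgeCliqueCover U D → C.card ≤ D.card)
    (hpure : ∀ c ∈ C, ∃ v ∈ c, ∀ c' ∈ C, v ∈ c' → c' = c) :
    ∀ D : Finset (Finset V), IsEdgeCliqueCover U D → D.card = C.card → D = C := by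
  intro D hD hcard
  have hpureD : ∀ c ∈ C, ∃ v, IsPureVertex C c v ∧ ∃ d ∈ D, v ∈ d := fun c hc => by
    obtain ⟨v, hv⟩ := hpure c hc
    exact ⟨v, hv,
      hD.exists_mem_of_nontrivial (hC.1 c hc) (hC.nontrivial_of_minimal hCmin hc) hv.1⟩
  have hCD : C ⊆ D := fun c hc => by
    obtain ⟨v, hv, d, hd, hvd⟩ := hpureD c hc
    have hvD := hC.isPureVertex_of_card_le hD hcard.le hpureD hc hv hd hvd
    exact hC.eq_of_isPureVertex hD hc hd hv hvD ▸ hd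
  exact (Finset.eq_of_subset_of_card_le hCD hcard.le).symm

/-- If `C` is a minimum edge clique cover of a finite simple graph `U` in which every member
contains a pure vertex (a vertex belonging to that member and to no other member of `C`), then
`C` is the unique minimum edge clique cover of `U`. -/
theorem pure_child_implies_unique_minimum_ecc
    {V : Type*} [Fintype V] [DecidableEq V] (U : SimpleGraph V)
    (C : Finset (Finset V))
    (hC : IsEdgeCliqueCover U C)
    (hCmin : ∀ D : Finset (Finset V), IsEdgeCliqueCover U D → C.card ≤ D.card)
    (hpure : ∀ c ∈ C, ∃ v ∈ c, ∀ c' ∈ C, v ∈ c' → c' = c) :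
    ∀ D : Finset (Finset V), IsEdgeCliqueCover U D → D.card = C.card → D = C :=
  pure_child_implies_unique_minimum_ecc_general U C hC hCmin hpure
end
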